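/- Let T be a left linear track category in which every morphism satisfies p·x = 0 for a fixed prime p, with linearity tracks satisfying the linearity track equations. Then for any morphism a and any n divisible by p², the track Γ(n)_a : 0 ⇒ 0 equals the identity track id₀. -/

import Mathlib

/-! A *left linear track category*: a track category (category enriched in groupoids)
whose hom-groupoids are abelian group objects in groupoids, with strictly left linear
composition (and pointed).  Tracks are encoded non-dependently, with source `src = δ₀`
and target `tgt = δ₁`; `vcomp α β` is the vertical composite `α □ β` (first `β`, then `α`);
`wl a α = a ⊗ α` and `wr α x = α ⊗ x` are the whiskerings. -/
structure LLTrackCat (Obj : Type u) (Hom : Obj → Obj → Type v) (Trk : Obj → Obj → Type w)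
    [∀ A B : Obj, AddCommGroup (Hom A B)] [∀ A B : Obj, AddCommGroup (Trk A B)] where
  src : ∀ {A B : Obj}, Trk A B → Hom A B
  tgt : ∀ {A B : Obj}, Trk A B → Hom A B
  vid : ∀ {A B : Obj}, Hom A B → Trk A B
  vcomp : ∀ {A B : Obj}, Trk A B → Trk A B → Trk A B
  vinv : ∀ {A B : Obj}, Trk A B → Trk A B
  one : ∀ A : Obj, Hom A A
  comp : ∀ {A B C : Obj}, Hom B C → Hom A B → Hom A C
  wl : ∀ {A B C : Obj}, Hom B C → Trk A B → Trk A C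
  wr : ∀ {A B C : Obj}, Trk B C → Hom A B → Trk A C
  -- each hom-groupoid is a groupoid
  src_vid : ∀ {A B : Obj} (x : Hom A B), src (vid x) = x
  tgt_vid : ∀ {A B : Obj} (x : Hom A B), tgt (vid x) = x
  src_vcomp : ∀ {A B : Obj} (α β : Trk A B), src α = tgt β → src (vcomp α β) = src β
  tgt_vcomp : ∀ {A B : Obj} (α β : Trk A B), src α = tgt β → tgt (vcomp α β) = tgt α
  vcomp_assoc : ∀ {A B : Obj} (α β γ : Trk A B), src α = tgt β → src β = tgt γ →
    vcomp (vcomp α β) γ = vcomp α (vcomp β γ)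
  vcomp_vid : ∀ {A B : Obj} (α : Trk A B), vcomp α (vid (src α)) = α
  vid_vcomp : ∀ {A B : Obj} (α : Trk A B), vcomp (vid (tgt α)) α = α
  src_vinv : ∀ {A B : Obj} (α : Trk A B), src (vinv α) = tgt α
  tgt_vinv : ∀ {A B : Obj} (α : Trk A B), tgt (vinv α) = src α
  vcomp_vinv : ∀ {A B : Obj} (α : Trk A B), vcomp α (vinv α) = vid (tgt α)
  vinv_vcomp : ∀ {A B : Obj} (α : Trk A B), vcomp (vinv α) α = vid (src α)
  -- each hom-groupoid is an abelian group object: the structure maps are additive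
  src_add : ∀ {A B : Obj} (α β : Trk A B), src (α + β) = src α + src β
  tgt_add : ∀ {A B : Obj} (α β : Trk A B), tgt (α + β) = tgt α + tgt β
  vid_add : ∀ {A B : Obj} (x y : Hom A B), vid (x + y) = vid x + vid y
  interchange : ∀ {A B : Obj} (α α' β β' : Trk A B), src α = tgt β → src α' = tgt β' →
    vcomp (α + α') (β + β') = vcomp α β + vcomp α' β'
  -- underlying category
  comp_assoc : ∀ {A B C D : Obj} (a : Hom C D) (b : Hom B C) (c : Hom A B),
    comp (comp a b) c = comp a (comp b c)
  one_comp : ∀ {A B : Obj} (x : Hom A B), comp (one B) x = x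
  comp_one : ∀ {A B : Obj} (x : Hom A B), comp x (one A) = x
  -- whiskering axioms
  src_wl : ∀ {A B C : Obj} (a : Hom B C) (α : Trk A B), src (wl a α) = comp a (src α)
  tgt_wl : ∀ {A B C : Obj} (a : Hom B C) (α : Trk A B), tgt (wl a α) = comp a (tgt α)
  src_wr : ∀ {A B C : Obj} (α : Trk B C) (x : Hom A B), src (wr α x) = comp (src α) x
  tgt_wr : ∀ {A B C : Obj} (α : Trk B C) (x : Hom A B), tgt (wr α x) = comp (tgt α) x
  wl_vid : ∀ {A B C : Obj} (a : Hom B C) (x : Hom A B), wl a (vid x) = vid (comp a x)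
  wr_vid : ∀ {A B C : Obj} (a : Hom B C) (x : Hom A B), wr (vid a) x = vid (comp a x)
  wl_vcomp : ∀ {A B C : Obj} (a : Hom B C) (α β : Trk A B), src α = tgt β →
    wl a (vcomp α β) = vcomp (wl a α) (wl a β)
  wr_vcomp : ∀ {A B C : Obj} (α β : Trk B C) (x : Hom A B), src α = tgt β →
    wr (vcomp α β) x = vcomp (wr α x) (wr β x)
  wl_wl : ∀ {A B C D : Obj} (a : Hom C D) (b : Hom B C) (α : Trk A B),
    wl a (wl b α) = wl (comp a b) α
  wr_wr : ∀ {A B C D : Obj} (α : Trk C D) (x : Hom B C) (y : Hom A B),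
    wr (wr α x) y = wr α (comp x y)
  wl_wr : ∀ {A B C D : Obj} (a : Hom C D) (α : Trk B C) (x : Hom A B),
    wr (wl a α) x = wl a (wr α x)
  wl_one : ∀ {A B : Obj} (α : Trk A B), wl (one B) α = α
  wr_one : ∀ {A B : Obj} (α : Trk A B), wr α (one A) = α
  -- the two factorizations of the horizontal composite of two tracks agree
  htw : ∀ {A B C : Obj} (α : Trk B C) (β : Trk A B),
    vcomp (wr α (tgt β)) (wl (src α) β) = vcomp (wl (tgt α) β) (wr α (src β))
  -- composition is strictly left linear
  comp_add_left : ∀ {A B C : Obj} (a a' : Hom B C) (x : Hom A B),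
    comp (a + a') x = comp a x + comp a' x
  wl_add_left : ∀ {A B C : Obj} (a a' : Hom B C) (α : Trk A B),
    wl (a + a') α = wl a α + wl a' α
  wr_add_left : ∀ {A B C : Obj} (α α' : Trk B C) (x : Hom A B),
    wr (α + α') x = wr α x + wr α' x
  -- pointedness
  comp_zero : ∀ {A B C : Obj} (a : Hom B C), comp a (0 : Hom A B) = 0
  wl_zero : ∀ {A B C : Obj} (a : Hom B C), wl a (0 : Trk A B) = 0
  wr_zero : ∀ {A B C : Obj} (α : Trk B C), wr α (0 : Hom A B) = vid 0

/-- A system of linearity tracks `Γ a x y : a(x+y) ⇒ ax + ay` satisfying the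
linearity track equations of Definition 3.3 (precomposition, postcomposition,
symmetry, left linearity, associativity, and naturality in both variables). -/
structure LinTracks {Obj : Type u} {Hom : Obj → Obj → Type v} {Trk : Obj → Obj → Type w}
    [∀ A B : Obj, AddCommGroup (Hom A B)] [∀ A B : Obj, AddCommGroup (Trk A B)]
    (T : LLTrackCat Obj Hom Trk) where
  Γ : ∀ {X A B : Obj}, Hom A B → Hom X A → Hom X A → Trk X B
  src_Γ : ∀ {X A B : Obj} (a : Hom A B) (x y : Hom X A),
    T.src (Γ a x y) = T.comp a (x + y)
  tgt_Γ : ∀ {X A B : Obj} (a : Hom A B) (x y : Hom X A),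
    T.tgt (Γ a x y) = T.comp a x + T.comp a y
  precomp : ∀ {Y X A B : Obj} (a : Hom A B) (x y : Hom X A) (z : Hom Y X),
    Γ a (T.comp x z) (T.comp y z) = T.wr (Γ a x y) z
  postcomp : ∀ {X A B C : Obj} (b : Hom B C) (a : Hom A B) (x y : Hom X A),
    Γ (T.comp b a) x y = T.vcomp (Γ b (T.comp a x) (T.comp a y)) (T.wl b (Γ a x y))
  symm : ∀ {X A B : Obj} (a : Hom A B) (x y : Hom X A), Γ a x y = Γ a y x
  leftlin : ∀ {X A B : Obj} (a a' : Hom A B) (x y : Hom X A),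
    Γ (a + a') x y = Γ a x y + Γ a' x y
  assocΓ : ∀ {X A B : Obj} (a : Hom A B) (x y z : Hom X A),
    T.vcomp (Γ a x y + T.vid (T.comp a z)) (Γ a (x + y) z)
      = T.vcomp (T.vid (T.comp a x) + Γ a y z) (Γ a x (y + z))
  natxy : ∀ {X A B : Obj} (a : Hom A B) (G H : Trk X A),
    T.vcomp (T.wl a G + T.wl a H) (Γ a (T.src G) (T.src H))
      = T.vcomp (Γ a (T.tgt G) (T.tgt H)) (T.wl a (G + H))
  nata : ∀ {X A B : Obj} (α : Trk A B) (x y : Hom X A),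
    T.vcomp (T.wr α x + T.wr α y) (Γ (T.src α) x y)
      = T.vcomp (Γ (T.tgt α) x y) (T.wr α (x + y))

/-- The iterated linearity track `Γ(n)_a = Γ_a^{1,…,1} : a(n·1) ⇒ n·a`
(with `n` copies of the identity), defined inductively by
`Γ_a^{x₁,…,xₙ} = (Γ_a^{x₁,…,x_{n-1}} + a xₙ) ∘ Γ_a^{x₁+⋯+x_{n-1},xₙ}`,
with `Γ_a^{x₁} = id` (and `Γ(0)_a = id₀`). -/
def GN {Obj : Type u} {Hom : Obj → Obj → Type v} {Trk : Obj → Obj → Type w}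
    [∀ A B : Obj, AddCommGroup (Hom A B)] [∀ A B : Obj, AddCommGroup (Trk A B)]
    (T : LLTrackCat Obj Hom Trk) (L : LinTracks T)
    {A B : Obj} (a : Hom A B) : ℕ → Trk A B
  | 0 => T.vid 0
  | 1 => T.vid a
  | (n + 2) =>
      T.vcomp (GN T L a (n + 1) + T.vid (T.comp a (T.one A)))
        (L.Γ a ((n + 1) • T.one A) (T.one A))

/-! Splitting the `m + n` copies of `1` after the first `m` and applying the associativity
equation gives `Γ(m+n)_a = (Γ(m)_a + Γ(n)_a) □ Γ_a^{m·1, n·1}`. As `Γ_a^{x,0}` is an identity,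
`k ↦ Γ(kp)_a` is additive once `p·1 = 0`, so `Γ(kp)_a = k·Γ(p)_a`. Every track is `p`-torsion,
since `p·α = (p·1) ⊗ α = 0 ⊗ α = 0`; hence `Γ(p²k)_a = k·(p·Γ(p)_a) = 0 = id₀`. -/

namespace LLTrackCat

variable {Obj : Type*} {Hom : Obj → Obj → Type*} {Trk : Obj → Obj → Type*}
  [∀ A B : Obj, AddCommGroup (Hom A B)] [∀ A B : Obj, AddCommGroup (Trk A B)]
  (T : LLTrackCat Obj Hom Trk)

def vidAddHom (A B : Obj) : Hom A B →+ Trk A B :=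
  AddMonoidHom.mk' T.vid T.vid_add

def wlAddHom {A B C : Obj} (α : Trk A B) : Hom B C →+ Trk A C :=
  AddMonoidHom.mk' (T.wl · α) (T.wl_add_left · · α)

theorem vid_zero {A B : Obj} : T.vid (0 : Hom A B) = 0 :=
  map_zero (T.vidAddHom A B)

theorem nsmul_trk_eq_zero {p : ℕ} {A B : Obj} (hp : p • T.one B = 0) (α : Trk A B) :
    p • α = 0 := by
  have h : T.wlAddHom α (p • T.one B) = p • T.wlAddHom α (T.one B) := map_nsmul _ _ _
  rwa [hp, map_zero, show T.wlAddHom α (T.one B) = α from T.wl_one α, eq_comm] at h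

theorem vcomp_vid_of_src_eq {A B : Obj} {α : Trk A B} {x : Hom A B} (h : T.src α = x) :
    T.vcomp α (T.vid x) = α := by
  rw [← h, T.vcomp_vid]

theorem vcomp_vid_self {A B : Obj} (x : Hom A B) : T.vcomp (T.vid x) (T.vid x) = T.vid x :=
  T.vcomp_vid_of_src_eq (T.src_vid x)

theorem eq_vid_of_vcomp_self {A B : Obj} {α : Trk A B} (hα : T.src α = T.tgt α)
    (h : T.vcomp α α = α) : α = T.vid (T.src α) := by
  have := congrArg (T.vcomp · (T.vinv α)) h
  simp only [T.vcomp_assoc _ _ _ hα (T.tgt_vinv α).symm, T.vcomp_vinv] at this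
  rwa [← hα, T.vcomp_vid] at this

theorem vcomp_add_vid {A B : Obj} {α β : Trk A B} (h : T.src α = T.tgt β) (x : Hom A B) :
    T.vcomp α β + T.vid x = T.vcomp (α + T.vid x) (β + T.vid x) := by
  rw [T.interchange _ _ _ _ h (by rw [T.src_vid, T.tgt_vid]), T.vcomp_vid_self]

end LLTrackCat

namespace LinTracks

variable {Obj : Type*} {Hom : Obj → Obj → Type*} {Trk : Obj → Obj → Type*}
  [∀ A B : Obj, AddCommGroup (Hom A B)] [∀ A B : Obj, AddCommGroup (Trk A B)]
  {T : LLTrackCat Obj Hom Trk} (L : LinTracks T)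

theorem Γ_zero_zero {X A B : Obj} (a : Hom A B) : L.Γ a (0 : Hom X A) 0 = 0 := by
  simpa only [T.comp_zero, T.wr_zero, T.vid_zero] using L.precomp a (0 : Hom X A) 0 0

/-- The associativity equation for `(x, 0, 0)` says that `Γ_a^{x,0}` is idempotent. -/
theorem Γ_zero_right {X A B : Obj} (a : Hom A B) (x : Hom X A) :
    L.Γ a x 0 = T.vid (T.comp a x) := by
  have hsrc : T.src (L.Γ a x 0) = T.comp a x := by rw [L.src_Γ, add_zero]
  have htgt : T.tgt (L.Γ a x 0) = T.comp a x := by rw [L.tgt_Γ, T.comp_zero, add_zero]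
  have hidem := L.assocΓ a x 0 0
  simp only [T.comp_zero, T.vid_zero, L.Γ_zero_zero, add_zero] at hidem
  rw [← htgt, T.vid_vcomp] at hidem
  rw [T.eq_vid_of_vcomp_self (hsrc.trans htgt.symm) hidem, hsrc]

theorem Γ_zero_left {X A B : Obj} (a : Hom A B) (y : Hom X A) :
    L.Γ a 0 y = T.vid (T.comp a y) := by
  rw [L.symm, L.Γ_zero_right]

end LinTracks

section IteratedLinearityTrack

variable {Obj : Type*} {Hom : Obj → Obj → Type*} {Trk : Obj → Obj → Type*}
  [∀ A B : Obj, AddCommGroup (Hom A B)] [∀ A B : Obj, AddCommGroup (Trk A B)]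
  (T : LLTrackCat Obj Hom Trk) (L : LinTracks T) {A B : Obj} (a : Hom A B)

theorem GN_succ (n : ℕ) :
    GN T L a (n + 1) = T.vcomp (GN T L a n + T.vid a) (L.Γ a (n • T.one A) (T.one A)) := by
  cases n with
  | zero =>
    rw [zero_smul, L.Γ_zero_left, T.comp_one, GN, GN, T.vid_zero, zero_add, T.vcomp_vid_self]
  | succ n => rw [GN, T.comp_one]

theorem src_GN (n : ℕ) : T.src (GN T L a n) = T.comp a (n • T.one A) := by
  induction n with
  | zero => rw [GN, T.src_vid, zero_smul, T.comp_zero]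
  | succ n ih =>
    rw [GN_succ, T.src_vcomp _ _ (by rw [T.src_add, ih, T.src_vid, L.tgt_Γ, T.comp_one]),
      L.src_Γ, succ_nsmul]

theorem GN_add (m n : ℕ) :
    GN T L a (m + n) =
      T.vcomp (GN T L a m + GN T L a n) (L.Γ a (m • T.one A) (n • T.one A)) := by
  induction n with
  | zero =>
    rw [add_zero, zero_smul, L.Γ_zero_right, GN, T.vid_zero, add_zero,
      T.vcomp_vid_of_src_eq (src_GN T L a m)]
  | succ n ih =>
    have hcomp :
        T.src (GN T L a m + GN T L a n) = T.tgt (L.Γ a (m • T.one A) (n • T.one A)) := by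
      rw [T.src_add, src_GN, src_GN, L.tgt_Γ]
    have hassoc := L.assocΓ a (m • T.one A) (n • T.one A) (T.one A)
    rw [T.comp_one, ← add_nsmul, ← succ_nsmul] at hassoc
    calc GN T L a (m + (n + 1))
        = T.vcomp (T.vcomp (GN T L a m + GN T L a n) (L.Γ a (m • T.one A) (n • T.one A))
              + T.vid a) (L.Γ a ((m + n) • T.one A) (T.one A)) := by
          rw [← add_assoc, GN_succ, ih]
      _ = T.vcomp (GN T L a m + GN T L a n + T.vid a)
            (T.vcomp (L.Γ a (m • T.one A) (n • T.one A) + T.vid a)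
              (L.Γ a ((m + n) • T.one A) (T.one A))) := by
        rw [T.vcomp_add_vid hcomp, T.vcomp_assoc]
        · rw [T.src_add, T.tgt_add, hcomp, T.src_vid, T.tgt_vid]
        · rw [T.src_add, L.src_Γ, L.tgt_Γ, T.src_vid, T.comp_one, add_nsmul]
      _ = T.vcomp (T.vcomp (GN T L a m + (GN T L a n + T.vid a))
              (T.vid (T.comp a (m • T.one A)) + L.Γ a (n • T.one A) (T.one A)))
            (L.Γ a (m • T.one A) ((n + 1) • T.one A)) := by
        rw [hassoc, add_assoc, T.vcomp_assoc]
        · simp only [T.src_add, T.tgt_add, T.src_vid, T.tgt_vid, L.tgt_Γ, src_GN, T.comp_one]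
        · rw [T.src_add, T.src_vid, L.src_Γ, L.tgt_Γ, succ_nsmul]
      _ = T.vcomp (GN T L a m + GN T L a (n + 1)) (L.Γ a (m • T.one A) ((n + 1) • T.one A)) := by
        rw [T.interchange _ _ _ _ (by rw [src_GN, T.tgt_vid])
            (by rw [T.src_add, src_GN, T.src_vid, L.tgt_Γ, T.comp_one]),
          T.vcomp_vid_of_src_eq (src_GN T L a m), ← T.comp_one a, ← GN_succ]

theorem GN_mul_of_nsmul_one_eq_zero {n : ℕ} (hn : n • T.one A = 0) (k : ℕ) :
    GN T L a (k * n) = k • GN T L a n := by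
  induction k with
  | zero => rw [zero_mul, zero_smul, GN, T.vid_zero]
  | succ k ih =>
    have hsrc : T.src (GN T L a (k * n) + GN T L a n) = T.comp a ((k * n) • T.one A) := by
      rw [T.src_add, src_GN, src_GN, hn, T.comp_zero, add_zero]
    rw [Nat.succ_mul, GN_add, hn, L.Γ_zero_right, T.vcomp_vid_of_src_eq hsrc, ih, succ_nsmul]

end IteratedLinearityTrack

/-- If every morphism of the left linear track category is
`p`-torsion (`p • x = 0`) for a prime `p`, then for any morphism `a` and any `n`
divisible by `p²`, the track `Γ(n)_a : 0 ⇒ 0` is the identity track `id₀`. -/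
theorem stmt7 {Obj : Type u} {Hom : Obj → Obj → Type v} {Trk : Obj → Obj → Type w}
    [∀ A B : Obj, AddCommGroup (Hom A B)] [∀ A B : Obj, AddCommGroup (Trk A B)]
    (T : LLTrackCat Obj Hom Trk) (L : LinTracks T)
    (p : ℕ) (hp : p.Prime) (htor : ∀ (A B : Obj) (x : Hom A B), p • x = 0)
    {A B : Obj} (a : Hom A B) (n : ℕ) (hn : p ^ 2 ∣ n) :
    GN T L a n = T.vid 0 := by
  obtain ⟨k, rfl⟩ := hn
  have hGN : p • GN T L a p = 0 := T.nsmul_trk_eq_zero (htor B B (T.one B)) _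
  rw [show p ^ 2 * k = (p * k) * p by ring, GN_mul_of_nsmul_one_eq_zero T L a (htor A A _),
    mul_nsmul, hGN, smul_zero, T.vid_zero]
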